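/- Suppose the edge-weighted conflict graph on n ≥ 2 vertices has inductive independence number at most ρ ≥ 1 with respect to the ordering π, and let x be a fractional LP solution of the weighted LP with value b*. Then there exists a feasible allocation S with b(S) ≥ b*/(16·√k·ρ·⌈log₂ n⌉). -/

import Mathlib

/-!
Split the LP mass into small channel sets (`#T ^ 2 ≤ k`) and large ones; one of the two parts
carries half of the LP value. Within that part the LP constraints bound, for every `v` and every
set `T` of the part, the `x`-weighted conflict weight of earlier vertices holding a set that meets
`T` by `√k * ρ`: a small `T` has at most `√k` channels, and a large set meeting `T` covers at
least `√k` channels. Rounding every vertex independently to `T` with probability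
`x v T / (4 * √k * ρ)` and then dropping the vertices whose conflict with earlier ones reaches
`1 / 2` keeps, by Markov's inequality, half of the expected value: this gives a partly feasible
allocation of value at least `b* / (16 * √k * ρ)`. First-fit levels assigned in reverse order
split a partly feasible allocation into feasible ones; each level holds more vertices than all
higher levels together, so there are at most `⌈log₂ n⌉` levels, and one of them keeps a
`1 / ⌈log₂ n⌉` share of the value.
-/

open Finset

/-- Symmetrized edge weights. -/
def wbar {n : ℕ} (w : Fin n → Fin n → ℝ) (u v : Fin n) : ℝ := w u v + w v u

/-- `M` is an independent set of the edge-weighted conflict graph `w`. -/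
def WIndep {n : ℕ} (w : Fin n → Fin n → ℝ) (M : Finset (Fin n)) : Prop :=
  ∀ v ∈ M, ∑ u ∈ M, w u v < 1

/-- The edge-weighted conflict graph `w` has inductive independence number at
most `ρ` with respect to the ordering `π`. -/
def WIndIndepAtMost {n : ℕ} (w : Fin n → Fin n → ℝ) (π : Equiv.Perm (Fin n))
    (ρ : ℝ) : Prop :=
  ∀ (v : Fin n) (M : Finset (Fin n)), (∀ u ∈ M, π u < π v) → WIndep w M →
    ∑ u ∈ M, wbar w u v ≤ ρ

/-- `x` is a fractional solution of the weighted LP. -/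
def WIsLPSol {n k : ℕ} (w : Fin n → Fin n → ℝ) (π : Equiv.Perm (Fin n)) (ρ : ℝ)
    (x : Fin n → Finset (Fin k) → ℝ) : Prop :=
  (∀ v T, 0 ≤ x v T) ∧
  (∀ (v : Fin n) (j : Fin k),
      ∑ u ∈ univ.filter (fun u => π u < π v),
        ∑ T ∈ univ.filter (fun T : Finset (Fin k) => j ∈ T),
          wbar w u v * x u T ≤ ρ) ∧
  (∀ v : Fin n, ∑ T : Finset (Fin k), x v T ≤ 1)

/-- `S` is a feasible allocation: for each channel `j`, the set of vertices
assigned channel `j` is an independent set of the weighted conflict graph. -/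
def WFeasibleAlloc {n k : ℕ} (w : Fin n → Fin n → ℝ)
    (S : Fin n → Finset (Fin k)) : Prop :=
  ∀ j : Fin k, WIndep w (univ.filter fun v => j ∈ S v)

/-- `S` is a partly feasible allocation. -/
def PartlyFeasible {n k : ℕ} (w : Fin n → Fin n → ℝ) (π : Equiv.Perm (Fin n))
    (S : Fin n → Finset (Fin k)) : Prop :=
  ∀ v : Fin n,
    ∑ u ∈ univ.filter (fun u => π u < π v ∧ (S u ∩ S v).Nonempty), wbar w u v
      < 1 / 2

section ProductWeights

/- `∏ i, p i (f i)` is the probability of `f` when every coordinate `i` is drawn independently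
from `p i`, so the sums below are expectations. -/

variable {ι β : Type*} [Fintype ι] [DecidableEq ι] [Fintype β] {p : ι → β → ℝ}

theorem sum_prod_mul_prod (p c : ι → β → ℝ) :
    ∑ f : ι → β, (∏ i, p i (f i)) * ∏ i, c i (f i) = ∏ i, ∑ d, p i d * c i d := by
  simp only [← Finset.prod_mul_distrib, Fintype.prod_sum]

theorem sum_prod_mul_apply (hp : ∀ i, ∑ d, p i d = 1) (v : ι) (g : β → ℝ) :
    ∑ f : ι → β, (∏ i, p i (f i)) * g (f v) = ∑ d, p v d * g d := by
  have key := sum_prod_mul_prod p (fun i => if i = v then g else 1)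
  rw [Fintype.prod_eq_single v (fun i hi => by simp [hi, hp])] at key
  convert key using 3 with f
  · rw [Fintype.prod_eq_single v (fun i hi => by simp [hi])]
    simp
  · simp

theorem sum_prod_mul_apply_mul_apply (hp : ∀ i, ∑ d, p i d = 1) {u v : ι} (huv : u ≠ v)
    (g h : β → ℝ) :
    ∑ f : ι → β, (∏ i, p i (f i)) * (g (f u) * h (f v))
      = (∑ d, p u d * g d) * ∑ e, p v e * h e := by
  have key := sum_prod_mul_prod p (fun i => if i = u then g else if i = v then h else 1)
  rw [Fintype.prod_eq_mul u v huv (fun i hi => by simp [hi.1, hi.2, hp])] at key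
  convert key using 3 with f
  · rw [Fintype.prod_eq_mul u v huv (fun i hi => by simp [hi.1, hi.2])]
    simp [huv.symm]
  · simp
  · simp [huv.symm]

theorem sum_prod_mul_apply₂ (hp : ∀ i, ∑ d, p i d = 1) {u v : ι} (huv : u ≠ v)
    (g : β → β → ℝ) :
    ∑ f : ι → β, (∏ i, p i (f i)) * g (f u) (f v) = ∑ d, p u d * ∑ e, p v e * g d e := by
  classical
  have hsplit : ∀ f : ι → β, g (f u) (f v)
      = ∑ d, ∑ e, (if f u = d then g d e else 0) * (if f v = e then 1 else 0) := by
    simp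
  simp_rw [hsplit, Finset.mul_sum]
  rw [Finset.sum_comm]
  refine Finset.sum_congr rfl fun d _ => ?_
  rw [Finset.sum_comm]
  refine Finset.sum_congr rfl fun e _ => ?_
  rw [sum_prod_mul_apply_mul_apply hp huv (fun a => if a = d then g d e else 0)
    (fun b => if b = e then 1 else 0)]
  simp only [mul_ite, mul_one, mul_zero, Finset.sum_ite_eq', Finset.mem_univ, if_true]
  ring

end ProductWeights

theorem exists_le_of_le_sum_mul {Ω : Type*} [Fintype Ω] {μ g : Ω → ℝ} (hμ0 : ∀ a, 0 ≤ μ a)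
    (hμ1 : ∑ a, μ a = 1) {A : ℝ} (h : A ≤ ∑ a, μ a * g a) : ∃ a, A ≤ g a := by
  by_contra! hlt
  obtain ⟨a₀, ha₀⟩ : ∃ a, 0 < μ a := by
    by_contra! h0
    linarith [Finset.sum_nonpos fun a (_ : a ∈ univ) => h0 a]
  have hsum : ∑ a, μ a * g a < ∑ a, μ a * A :=
    Finset.sum_lt_sum (fun a _ => mul_le_mul_of_nonneg_left (hlt a).le (hμ0 a))
      ⟨a₀, mem_univ _, mul_lt_mul_of_pos_left (hlt a₀) ha₀⟩
  rw [← Finset.sum_mul, hμ1, one_mul] at hsum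
  linarith

section ScaledProb

variable {γ : Type*} [DecidableEq γ] {α : ℝ} {o : γ} {F : Finset γ} {y : γ → ℝ}

noncomputable def scaledProb (α : ℝ) (o : γ) (F : Finset γ) (y : γ → ℝ) (c : γ) : ℝ :=
  (if c ∈ F then y c / α else 0) + if c = o then 1 - (∑ c' ∈ F, y c') / α else 0

theorem scaledProb_nonneg (hα : 0 < α) (hy : ∀ c, 0 ≤ y c) (hyα : ∑ c ∈ F, y c ≤ α) (c : γ) :
    0 ≤ scaledProb α o F y c := by
  have : (∑ c' ∈ F, y c') / α ≤ 1 := (div_le_one hα).2 hyα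
  unfold scaledProb
  split_ifs <;> first | positivity | linarith [div_nonneg (hy c) hα.le]

theorem sum_scaledProb_mul [Fintype γ] (g : γ → ℝ) (hg : g o = 0) :
    ∑ c, scaledProb α o F y c * g c = (∑ c ∈ F, y c * g c) / α := by
  simp only [scaledProb, add_mul, ite_mul, zero_mul, Finset.sum_add_distrib,
    Finset.sum_ite_mem, Finset.univ_inter, Finset.sum_ite_eq', Finset.mem_univ, if_true, hg,
    mul_zero, add_zero, Finset.sum_div]
  exact Finset.sum_congr rfl fun c _ => by ring

theorem sum_scaledProb [Fintype γ] : ∑ c, scaledProb α o F y c = 1 := by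
  simp only [scaledProb, Finset.sum_add_distrib, Finset.sum_ite_mem, Finset.univ_inter,
    Finset.sum_ite_eq', Finset.mem_univ, if_true, ← Finset.sum_div]
  ring

end ScaledProb

section Rounding

variable {n k : ℕ} {w : Fin n → Fin n → ℝ} {π : Equiv.Perm (Fin n)}

theorem wbar_nonneg (hw : ∀ u v, 0 ≤ w u v) (u v : Fin n) : 0 ≤ wbar w u v :=
  add_nonneg (hw u v) (hw v u)

variable (w π)

def conflict (S : Fin n → Finset (Fin k)) (v : Fin n) (T : Finset (Fin k)) : ℝ :=
  ∑ u ∈ univ with π u < π v ∧ (S u ∩ T).Nonempty, wbar w u v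

noncomputable def prune (S : Fin n → Finset (Fin k)) (v : Fin n) : Finset (Fin k) :=
  if conflict w π S v (S v) < 1 / 2 then S v else ∅

def overlapLoad (F : Finset (Finset (Fin k))) (x : Fin n → Finset (Fin k) → ℝ) (v : Fin n)
    (T : Finset (Fin k)) : ℝ :=
  ∑ u ∈ univ with π u < π v, wbar w u v * ∑ T' ∈ F with (T' ∩ T).Nonempty, x u T'

variable {w π}

theorem conflict_nonneg (hw : ∀ u v, 0 ≤ w u v) (S : Fin n → Finset (Fin k)) (v : Fin n)
    (T : Finset (Fin k)) : 0 ≤ conflict w π S v T :=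
  Finset.sum_nonneg fun u _ => wbar_nonneg hw u v

theorem conflict_mono (hw : ∀ u v, 0 ≤ w u v) {S S' : Fin n → Finset (Fin k)}
    {T T' : Finset (Fin k)}
    (hS : ∀ u, S u ⊆ S' u) (hT : T ⊆ T') (v : Fin n) :
    conflict w π S v T ≤ conflict w π S' v T' := by
  refine Finset.sum_le_sum_of_subset_of_nonneg (fun u => ?_) fun u _ _ => wbar_nonneg hw u v
  simp only [Finset.mem_filter, Finset.mem_univ, true_and]
  exact And.imp_right fun h => h.mono (Finset.inter_subset_inter (hS u) hT)

theorem conflict_eq_sum_ite (S : Fin n → Finset (Fin k)) (v : Fin n) (T : Finset (Fin k)) :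
    conflict w π S v T
      = ∑ u ∈ univ with π u < π v, if (S u ∩ T).Nonempty then wbar w u v else 0 := by
  rw [conflict, ← Finset.filter_filter, Finset.sum_filter]

theorem prune_subset (S : Fin n → Finset (Fin k)) (v : Fin n) : prune w π S v ⊆ S v := by
  unfold prune
  split_ifs
  exacts [subset_rfl, Finset.empty_subset _]

theorem partlyFeasible_prune (hw : ∀ u v, 0 ≤ w u v) (S : Fin n → Finset (Fin k)) :
    PartlyFeasible w π (prune w π S) := by
  intro v
  change conflict w π (prune w π S) v (prune w π S v) < 1 / 2
  by_cases h : conflict w π S v (S v) < 1 / 2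
  · exact (conflict_mono hw (prune_subset S) (prune_subset S v) v).trans_lt h
  · rw [show prune w π S v = ∅ from if_neg h]
    simp [conflict]

-- Markov's inequality, pointwise: a dropped vertex has conflict at least `1 / 2`.
theorem mul_one_sub_two_conflict_le_prune (hw : ∀ u v, 0 ≤ w u v) {b : Finset (Fin k) → ℝ}
    (hb : ∀ T, 0 ≤ b T) (hb0 : b ∅ = 0) (S : Fin n → Finset (Fin k)) (v : Fin n) :
    b (S v) * (1 - 2 * conflict w π S v (S v)) ≤ b (prune w π S v) := by
  unfold prune
  split_ifs with h
  · exact mul_le_of_le_one_right (hb _) (by linarith [conflict_nonneg (π := π) hw S v (S v)])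
  · rw [hb0]
    exact mul_nonpos_of_nonneg_of_nonpos (hb _) (by linarith)

theorem sum_prod_scaledProb_mul_conflict {α : ℝ} {F : Finset (Finset (Fin k))}
    {x : Fin n → Finset (Fin k) → ℝ} {b : Finset (Fin k) → ℝ} (hb0 : b ∅ = 0) (v : Fin n) :
    ∑ f : Fin n → Finset (Fin k),
        (∏ i, scaledProb α ∅ F (x i) (f i)) * (b (f v) * conflict w π f v (f v))
      = (∑ T ∈ F, x v T * (b T * overlapLoad w π F x v T)) / α ^ 2 := by
  have hmeet : ∀ u ∈ univ.filter (π · < π v), ∑ f : Fin n → Finset (Fin k),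
      (∏ i, scaledProb α ∅ F (x i) (f i)) *
        (b (f v) * if (f u ∩ f v).Nonempty then wbar w u v else 0)
      = (∑ T ∈ F, x v T * (b T * (wbar w u v * ∑ T' ∈ F with (T' ∩ T).Nonempty, x u T')))
        / α ^ 2 := by
    intro u hu
    have hvu : v ≠ u := fun h => by simp [h] at hu
    rw [sum_prod_mul_apply₂ (fun i => sum_scaledProb) hvu
      (fun e d => b e * if (d ∩ e).Nonempty then wbar w u v else 0)]
    have hinner : ∀ e, ∑ d, scaledProb α ∅ F (x u) d *
        (b e * if (d ∩ e).Nonempty then wbar w u v else 0)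
        = b e * (wbar w u v * ∑ T' ∈ F with (T' ∩ e).Nonempty, x u T') / α := by
      intro e
      rw [sum_scaledProb_mul _ (by simp), Finset.sum_filter, Finset.mul_sum, Finset.mul_sum]
      congr 1
      refine Finset.sum_congr rfl fun d _ => ?_
      split_ifs <;> ring
    simp_rw [hinner]
    rw [sum_scaledProb_mul _ (by simp [hb0]), sq, ← div_div]
    simp_rw [mul_div_assoc', Finset.sum_div]
  simp_rw [conflict_eq_sum_ite, Finset.mul_sum]
  rw [Finset.sum_comm, Finset.sum_congr rfl hmeet, ← Finset.sum_div, Finset.sum_comm]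
  simp only [overlapLoad, Finset.mul_sum]

end Rounding

section RoundingValue

variable {n k : ℕ} {w : Fin n → Fin n → ℝ} {π : Equiv.Perm (Fin n)}
  {b x : Fin n → Finset (Fin k) → ℝ} {F : Finset (Finset (Fin k))} {α : ℝ}

theorem le_sum_prod_scaledProb_mul_prune (hw : ∀ u v, 0 ≤ w u v) (hb : ∀ v T, 0 ≤ b v T)
    (hb0 : ∀ v, b v ∅ = 0) (hx : ∀ v T, 0 ≤ x v T) (hα : 0 < α) (hxα : ∀ v, ∑ T ∈ F, x v T ≤ α)
    (hload : ∀ v, ∀ T ∈ F, overlapLoad w π F x v T ≤ α / 4) (v : Fin n) :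
    (∑ T ∈ F, b v T * x v T) / (2 * α)
      ≤ ∑ f : Fin n → Finset (Fin k),
          (∏ i, scaledProb α ∅ F (x i) (f i)) * b v (prune w π f v) := by
  set A := ∑ T ∈ F, x v T * b v T
  set B := ∑ T ∈ F, x v T * (b v T * overlapLoad w π F x v T)
  have hB : B / α ^ 2 ≤ A / (4 * α) := by
    have : B ≤ α / 4 * A := by
      rw [Finset.mul_sum]
      refine Finset.sum_le_sum fun T hT => ?_
      have := mul_le_mul_of_nonneg_left (hload v T hT) (mul_nonneg (hx v T) (hb v T))
      linarith
    rw [div_le_div_iff₀ (by positivity) (by positivity)]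
    nlinarith
  have hA : ∑ T ∈ F, b v T * x v T = A := Finset.sum_congr rfl fun _ _ => mul_comm _ _
  calc (∑ T ∈ F, b v T * x v T) / (2 * α) ≤ A / α - 2 * (B / α ^ 2) := by
        have e : A / (2 * α) = A / α - 2 * (A / (4 * α)) := by field_simp; ring
        rw [hA]
        linarith
    _ = ∑ f : Fin n → Finset (Fin k), (∏ i, scaledProb α ∅ F (x i) (f i)) *
          (b v (f v) * (1 - 2 * conflict w π f v (f v))) := by
        simp only [mul_sub, mul_one, Finset.sum_sub_distrib, mul_left_comm _ (2 : ℝ),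
          ← Finset.mul_sum]
        rw [sum_prod_mul_apply (fun i => sum_scaledProb) v (b v), sum_scaledProb_mul _ (hb0 v),
          sum_prod_scaledProb_mul_conflict (hb0 v) v]
    _ ≤ _ := Finset.sum_le_sum fun f _ =>
        mul_le_mul_of_nonneg_left (mul_one_sub_two_conflict_le_prune hw (hb v) (hb0 v) f v)
          (Finset.prod_nonneg fun i _ => scaledProb_nonneg hα (hx i) (hxα i) _)

theorem exists_partlyFeasible_of_overlapLoad_le (hw : ∀ u v, 0 ≤ w u v)
    (hb : ∀ v T, 0 ≤ b v T) (hb0 : ∀ v, b v ∅ = 0) (hx : ∀ v T, 0 ≤ x v T) (hα : 0 < α)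
    (hxα : ∀ v, ∑ T ∈ F, x v T ≤ α)
    (hload : ∀ v, ∀ T ∈ F, overlapLoad w π F x v T ≤ α / 4) :
    ∃ S, PartlyFeasible w π S ∧
      (∑ v, ∑ T ∈ F, b v T * x v T) / (2 * α) ≤ ∑ v, b v (S v) := by
  have hμ1 : ∑ f : Fin n → Finset (Fin k), ∏ i, scaledProb α ∅ F (x i) (f i) = 1 := by
    simp [← Fintype.prod_sum, sum_scaledProb]
  obtain ⟨f, hf⟩ := exists_le_of_le_sum_mul
    (fun f => Finset.prod_nonneg fun i _ => scaledProb_nonneg hα (hx i) (hxα i) _) hμ1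
    (g := fun f => ∑ v, b v (prune w π f v))
    (A := (∑ v, ∑ T ∈ F, b v T * x v T) / (2 * α)) <| by
      rw [Finset.sum_div]
      refine (Finset.sum_le_sum fun v _ =>
        le_sum_prod_scaledProb_mul_prune hw hb hb0 hx hα hxα hload v).trans_eq ?_
      simp only [Finset.mul_sum]
      exact Finset.sum_comm
  exact ⟨prune w π f, partlyFeasible_prune hw f, hf⟩

end RoundingValue

section FirstFit

variable {ι κ : Type*} [LinearOrder κ] (r : ι → κ) (D : ι → ι → ℝ) (θ : ℝ)

def forwardLoad (s : Finset ι) (f : ι → ℕ) (v : ι) (i : ℕ) : ℝ :=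
  ∑ u ∈ s with r v < r u ∧ f u = i, D v u

def IsFirstFit (s : Finset ι) (f : ι → ℕ) : Prop :=
  ∀ v ∈ s, 1 ≤ f v ∧ forwardLoad r D s f v (f v) < θ ∧
    ∀ i, 1 ≤ i → i < f v → θ ≤ forwardLoad r D s f v i

variable {r D θ}

theorem forwardLoad_insert_update [DecidableEq ι] {s : Finset ι} {a v : ι} (ha : a ∉ s)
    (hv : ¬r v < r a) (f : ι → ℕ) (i j : ℕ) :
    forwardLoad r D (insert a s) (Function.update f a i) v j = forwardLoad r D s f v j := by
  rw [forwardLoad, Finset.filter_insert, if_neg (by simp [hv])]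
  refine Finset.sum_congr (Finset.filter_congr fun u hu => ?_) fun _ _ => rfl
  rw [Function.update_of_ne (ne_of_mem_of_not_mem hu ha)]

theorem exists_isFirstFit [DecidableEq ι] (hθ : 0 < θ) (s : Finset ι) :
    ∃ f, IsFirstFit r D θ s f := by
  induction s using Finset.induction_on_min_value r with
  | empty => exact ⟨fun _ => 0, by simp [IsFirstFit]⟩
  | insert a s ha hmin ih =>
    obtain ⟨f, hf⟩ := ih
    have hex : ∃ i, 1 ≤ i ∧ forwardLoad r D s f a i < θ := by
      refine ⟨s.sup f + 1, Nat.le_add_left 1 _, ?_⟩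
      rw [forwardLoad, Finset.filter_false_of_mem fun u hu h => by
        have := Finset.le_sup (f := f) hu; omega]
      simpa using hθ
    refine ⟨Function.update f a (Nat.find hex), fun v hv => ?_⟩
    rcases Finset.mem_insert.1 hv with rfl | hv
    · simp only [Function.update_self, forwardLoad_insert_update ha (lt_irrefl _)]
      exact ⟨(Nat.find_spec hex).1, (Nat.find_spec hex).2,
        fun i h1 h2 => not_lt.1 fun h => Nat.find_min hex h2 ⟨h1, h⟩⟩
    · simp only [Function.update_of_ne (ne_of_mem_of_not_mem hv ha),
        forwardLoad_insert_update ha (not_lt.2 (hmin v hv))]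
      exact hf v hv

variable [Fintype ι]

/- Every vertex above level `t` sends load at least `θ` to level `t`, while every vertex of level
`t` receives less than `θ`; so level `t` outnumbers all higher levels. -/
theorem two_mul_card_lt_of_isFirstFit (hθ : 0 < θ) (hD : ∀ u v, 0 ≤ D u v)
    (hback : ∀ u, ∑ v ∈ univ with r v < r u, D v u < θ) {f : ι → ℕ}
    (hf : IsFirstFit r D θ univ f) {t : ℕ} (ht : 1 ≤ t)
    (hne : (univ.filter fun v => t + 1 ≤ f v).Nonempty) :
    2 * #(univ.filter fun v => t + 1 ≤ f v) < #(univ.filter fun v => t ≤ f v) := by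
  classical
  set N := univ.filter fun v => t + 1 ≤ f v
  set C := univ.filter fun u => f u = t
  have hcount : #N * θ ≤ ∑ u ∈ C, ∑ v ∈ univ with r v < r u, D v u :=
    calc #N * θ = ∑ v ∈ N, θ := by rw [Finset.sum_const, nsmul_eq_mul]
      _ ≤ ∑ v ∈ N, forwardLoad r D univ f v t := Finset.sum_le_sum fun v hv =>
          (hf v (mem_univ v)).2.2 t ht (by simp only [N, Finset.mem_filter] at hv; omega)
      _ ≤ ∑ u ∈ C, ∑ v ∈ univ with r v < r u, D v u := by
          unfold forwardLoad
          rw [Finset.sum_comm' (t' := C) (s' := fun u => N.filter (r · < r u)) (by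
            intro v u; simp only [Finset.mem_filter, Finset.mem_univ, true_and, N, C]; tauto)]
          exact Finset.sum_le_sum fun u _ => Finset.sum_le_sum_of_subset_of_nonneg
            (Finset.filter_subset_filter _ (Finset.subset_univ _)) fun _ _ _ => hD _ _
  have hC : C.Nonempty := by
    rcases C.eq_empty_or_nonempty with h | h
    · rw [h, Finset.sum_empty] at hcount
      have : (0 : ℝ) < #N := by exact_mod_cast hne.card_pos
      nlinarith
    · exact h
  have hlt : #N < #C := by
    have := Finset.sum_lt_sum_of_nonempty hC fun u _ => hback u
    rw [Finset.sum_const, nsmul_eq_mul] at this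
    exact_mod_cast lt_of_mul_lt_mul_right (hcount.trans_lt this) hθ.le
  have hdisj : Disjoint C N := Finset.disjoint_filter.2 fun v _ h => by omega
  have hsub : C ∪ N ⊆ univ.filter fun v => t ≤ f v := fun v hv => by
    rcases Finset.mem_union.1 hv with h | h <;>
      simp only [C, N, Finset.mem_filter, Finset.mem_univ, true_and] at h ⊢ <;> omega
  have := Finset.card_le_card hsub
  rw [Finset.card_union_of_disjoint hdisj] at this
  omega

theorem two_pow_le_card_add_one_of_isFirstFit (hθ : 0 < θ) (hD : ∀ u v, 0 ≤ D u v)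
    (hback : ∀ u, ∑ v ∈ univ with r v < r u, D v u < θ) {f : ι → ℕ}
    (hf : IsFirstFit r D θ univ f) (v : ι) : 2 ^ f v ≤ Fintype.card ι + 1 := by
  have key : ∀ s t, 1 ≤ t → t + s ≤ f v → 2 ^ (s + 1) ≤ #(univ.filter fun u => t ≤ f u) + 1 := by
    intro s
    induction s with
    | zero =>
      intro t _ h
      have hv : (univ.filter fun u => t ≤ f u).Nonempty :=
        ⟨v, by simp only [Finset.mem_filter, Finset.mem_univ, true_and]; omega⟩
      have := hv.card_pos
      omega
    | succ s ih =>
      intro t ht h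
      have h1 := ih (t + 1) (by omega) (by omega)
      have h2 := two_mul_card_lt_of_isFirstFit hθ hD hback hf ht
        ⟨v, by simp only [Finset.mem_filter, Finset.mem_univ, true_and]; omega⟩
      rw [pow_succ]
      omega
  have h1 := (hf v (mem_univ v)).1
  have := key (f v - 1) 1 le_rfl (by omega)
  rw [Nat.sub_add_cancel h1] at this
  exact this.trans (Nat.add_le_add_right (Finset.card_le_univ _) 1)

end FirstFit

section Decomposition

variable {n k : ℕ} {w : Fin n → Fin n → ℝ} {π : Equiv.Perm (Fin n)} {S : Fin n → Finset (Fin k)}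

def sharedWeight (w : Fin n → Fin n → ℝ) (S : Fin n → Finset (Fin k)) (v u : Fin n) : ℝ :=
  if (S v ∩ S u).Nonempty then wbar w v u else 0

theorem sharedWeight_nonneg (hw : ∀ u v, 0 ≤ w u v) (v u : Fin n) : 0 ≤ sharedWeight w S v u := by
  unfold sharedWeight
  split_ifs
  exacts [wbar_nonneg hw v u, le_rfl]

theorem PartlyFeasible.sum_sharedWeight_lt (hS : PartlyFeasible w π S) (u : Fin n) :
    ∑ v ∈ univ with π v < π u, sharedWeight w S v u < 1 / 2 :=
  conflict_eq_sum_ite (w := w) (π := π) S u (S u) ▸ hS u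

theorem PartlyFeasible.feasibleAlloc_levelClass (hw : ∀ u v, 0 ≤ w u v) (hw0 : ∀ v, w v v = 0)
    (hS : PartlyFeasible w π S) {f : Fin n → ℕ}
    (hf : IsFirstFit π (sharedWeight w S) (1 / 2) univ f) (i : ℕ) :
    WFeasibleAlloc w fun v => if f v = i then S v else ∅ := by
  intro j v hv
  have hmem : ∀ u, j ∈ (if f u = i then S u else ∅) ↔ f u = i ∧ j ∈ S u := by
    intro u
    split_ifs with h <;> simp [h]
  obtain ⟨hfv, hjv⟩ := (hmem v).1 (Finset.mem_filter.1 hv).2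
  -- earlier vertices of the class are paid for by partial feasibility, later ones by first fit
  have hcharge : ∀ u ∈ univ.filter fun u => j ∈ (if f u = i then S u else ∅),
      w u v ≤ (if π u < π v ∧ (S u ∩ S v).Nonempty then wbar w u v else 0)
        + if π v < π u ∧ f u = f v then sharedWeight w S v u else 0 := by
    intro u hu
    obtain ⟨hfu, hju⟩ := (hmem u).1 (Finset.mem_filter.1 hu).2
    have hshare : (S u ∩ S v).Nonempty := ⟨j, Finset.mem_inter.2 ⟨hju, hjv⟩⟩
    have hshare' : (S v ∩ S u).Nonempty := ⟨j, Finset.mem_inter.2 ⟨hjv, hju⟩⟩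
    rcases lt_trichotomy (π u) (π v) with h | h | h
    · simp only [h, h.not_gt, hshare, and_self, if_true, false_and, if_false, add_zero, wbar]
      linarith [hw v u]
    · obtain rfl := π.injective h
      simp [hw0]
    · simp only [h, h.not_gt, hshare', hfu, hfv, sharedWeight, and_self, if_true, false_and,
        if_false, zero_add, wbar]
      linarith [hw v u]
  calc ∑ u ∈ univ.filter fun u => j ∈ (if f u = i then S u else ∅), w u v
      ≤ ∑ u, ((if π u < π v ∧ (S u ∩ S v).Nonempty then wbar w u v else 0)
          + if π v < π u ∧ f u = f v then sharedWeight w S v u else 0) :=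
        (Finset.sum_le_sum hcharge).trans <| Finset.sum_le_sum_of_subset_of_nonneg
          (Finset.subset_univ _) fun u _ _ => add_nonneg
            (by split_ifs; exacts [wbar_nonneg hw u v, le_rfl])
            (by split_ifs; exacts [sharedWeight_nonneg hw v u, le_rfl])
    _ = conflict w π S v (S v) + forwardLoad π (sharedWeight w S) univ f v (f v) := by
        rw [Finset.sum_add_distrib, ← Finset.sum_filter, ← Finset.sum_filter]
        rfl
    _ < 1 / 2 + 1 / 2 := add_lt_add (hS v) (hf v (mem_univ v)).2.1
    _ = 1 := by norm_num

theorem PartlyFeasible.le_clog_of_isFirstFit (hn : 2 ≤ n) (hw : ∀ u v, 0 ≤ w u v)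
    (hS : PartlyFeasible w π S) {f : Fin n → ℕ}
    (hf : IsFirstFit π (sharedWeight w S) (1 / 2) univ f) (v : Fin n) :
    f v ≤ Nat.clog 2 n := by
  have hpow := two_pow_le_card_add_one_of_isFirstFit (by norm_num) (sharedWeight_nonneg hw)
    hS.sum_sharedWeight_lt hf v
  rw [Fintype.card_fin] at hpow
  have hclog := Nat.le_pow_clog one_lt_two n
  have hL : 2 ≤ 2 ^ Nat.clog 2 n :=
    le_self_pow₀ one_le_two (Nat.clog_pos one_lt_two hn).ne'
  by_contra! h
  have := Nat.pow_le_pow_right two_pos h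
  rw [pow_succ] at this
  omega

theorem PartlyFeasible.exists_feasibleAlloc (hn : 2 ≤ n) (hw : ∀ u v, 0 ≤ w u v)
    (hw0 : ∀ v, w v v = 0) {b : Fin n → Finset (Fin k) → ℝ} (hb0 : ∀ v, b v ∅ = 0)
    (hS : PartlyFeasible w π S) :
    ∃ S', WFeasibleAlloc w S' ∧ (∑ v, b v (S v)) / (Nat.clog 2 n : ℝ) ≤ ∑ v, b v (S' v) := by
  obtain ⟨f, hf⟩ :=
    exists_isFirstFit (r := π) (D := sharedWeight w S) (θ := 1 / 2) (by norm_num) univ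
  set L := Nat.clog 2 n
  have hL : 1 ≤ L := Nat.clog_pos one_lt_two hn
  have hsum : ∑ i ∈ Icc 1 L, ∑ v, b v (if f v = i then S v else ∅) = ∑ v, b v (S v) := by
    rw [Finset.sum_comm]
    refine Finset.sum_congr rfl fun v _ => ?_
    simp only [apply_ite (b v), hb0, Finset.sum_ite_eq]
    rw [if_pos (Finset.mem_Icc.2 ⟨(hf v (mem_univ v)).1, hS.le_clog_of_isFirstFit hn hw hf v⟩)]
  obtain ⟨i, -, hi⟩ := Finset.exists_le_of_sum_le (Finset.nonempty_Icc.2 hL)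
    (f := fun _ => (∑ v, b v (S v)) / L) (g := fun i => ∑ v, b v (if f v = i then S v else ∅)) <| by
      have : (L : ℝ) ≠ 0 := by exact_mod_cast (by omega : L ≠ 0)
      rw [hsum, Finset.sum_const, Nat.card_Icc, nsmul_eq_mul, Nat.add_sub_cancel]
      field_simp
      rfl
  exact ⟨_, hS.feasibleAlloc_levelClass hw hw0 hf i, hi⟩

end Decomposition

theorem sum_card_inter_mul {β : Type*} [Fintype β] [DecidableEq β] (J : Finset β)
    (y : Finset β → ℝ) : ∑ T, #(J ∩ T) * y T = ∑ j ∈ J, ∑ T with j ∈ T, y T := by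
  simp_rw [Finset.sum_filter]
  rw [Finset.sum_comm]
  refine Finset.sum_congr rfl fun T _ => ?_
  rw [← Finset.sum_filter, Finset.filter_mem_eq_inter, Finset.sum_const, nsmul_eq_mul]

theorem overlapLoad_le {n k : ℕ} {w : Fin n → Fin n → ℝ} {π : Equiv.Perm (Fin n)} {ρ : ℝ}
    {x : Fin n → Finset (Fin k) → ℝ} (hw : ∀ u v, 0 ≤ w u v) (hx : WIsLPSol w π ρ x)
    {F : Finset (Finset (Fin k))} {T J : Finset (Fin k)} {c : ℝ} (hc : 0 < c)
    (hJ : ∀ T' ∈ F, (T' ∩ T).Nonempty → c ≤ #(J ∩ T')) (v : Fin n) :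
    overlapLoad w π F x v T ≤ #J * ρ / c := by
  obtain ⟨hx0, hLP, -⟩ := hx
  have hmeet : ∀ u, ∑ T' ∈ F with (T' ∩ T).Nonempty, x u T'
      ≤ (∑ j ∈ J, ∑ T' with j ∈ T', x u T') / c := by
    intro u
    rw [← sum_card_inter_mul, le_div_iff₀ hc, Finset.sum_mul]
    calc ∑ T' ∈ F with (T' ∩ T).Nonempty, x u T' * c
        ≤ ∑ T' ∈ F with (T' ∩ T).Nonempty, #(J ∩ T') * x u T' :=
          Finset.sum_le_sum fun T' hT' => by
            rw [mul_comm]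
            exact mul_le_mul_of_nonneg_right (hJ T' (Finset.mem_filter.1 hT').1
              (Finset.mem_filter.1 hT').2) (hx0 u T')
      _ ≤ ∑ T', #(J ∩ T') * x u T' :=
          Finset.sum_le_sum_of_subset_of_nonneg (Finset.subset_univ _) fun _ _ _ =>
            mul_nonneg (Nat.cast_nonneg _) (hx0 _ _)
  calc overlapLoad w π F x v T
      ≤ ∑ u ∈ univ with π u < π v, wbar w u v * ((∑ j ∈ J, ∑ T' with j ∈ T', x u T') / c) :=
        Finset.sum_le_sum fun u _ => mul_le_mul_of_nonneg_left (hmeet u) (wbar_nonneg hw u v)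
    _ = (∑ j ∈ J, ∑ u ∈ univ with π u < π v, ∑ T' with j ∈ T', wbar w u v * x u T') / c := by
        simp_rw [mul_div_assoc', Finset.mul_sum, Finset.sum_div]
        exact Finset.sum_comm
    _ ≤ (∑ j ∈ J, ρ) / c := div_le_div_of_nonneg_right (Finset.sum_le_sum fun j _ => hLP v j) hc.le
    _ = #J * ρ / c := by rw [Finset.sum_const, nsmul_eq_mul]

theorem overlapLoad_le_of_card_sq_le {n k : ℕ} {w : Fin n → Fin n → ℝ}
    {π : Equiv.Perm (Fin n)} {ρ : ℝ} {x : Fin n → Finset (Fin k) → ℝ} (hw : ∀ u v, 0 ≤ w u v)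
    (hx : WIsLPSol w π ρ x) (hρ : 0 ≤ ρ) (F : Finset (Finset (Fin k))) {T : Finset (Fin k)}
    (hT : #T ^ 2 ≤ k) (v : Fin n) : overlapLoad w π F x v T ≤ √k * ρ := by
  refine (overlapLoad_le hw hx (J := T) one_pos (fun T' _ hmeet => ?_) v).trans ?_
  · rw [Finset.inter_comm] at hmeet
    exact_mod_cast hmeet.card_pos
  · have : (#T : ℝ) ≤ √k := (Real.le_sqrt (by positivity) (by positivity)).2 (by exact_mod_cast hT)
    rw [div_one]
    exact mul_le_mul_of_nonneg_right this hρ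

theorem overlapLoad_le_of_le_card_sq {n k : ℕ} {w : Fin n → Fin n → ℝ}
    {π : Equiv.Perm (Fin n)} {ρ : ℝ} {x : Fin n → Finset (Fin k) → ℝ} (hw : ∀ u v, 0 ≤ w u v)
    (hx : WIsLPSol w π ρ x) (hk : 0 < k) {F : Finset (Finset (Fin k))}
    (hF : ∀ T ∈ F, k ≤ #T ^ 2) (v : Fin n) (T : Finset (Fin k)) :
    overlapLoad w π F x v T ≤ √k * ρ := by
  refine (overlapLoad_le hw hx (J := univ) (c := √k) (by positivity)
    (fun T' hT' _ => ?_) v).trans ?_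
  · rw [Finset.univ_inter, Real.sqrt_le_left (by positivity)]
    exact_mod_cast hF T' hT'
  · rw [Finset.card_univ, Fintype.card_fin, mul_div_right_comm, Real.div_sqrt]

theorem exists_feasible_alloc_of_weighted_lp_solution_general {n k : ℕ} (hn : 2 ≤ n)
    (hk : 1 ≤ k)
    (w : Fin n → Fin n → ℝ) (hw : ∀ u v, 0 ≤ w u v) (hw0 : ∀ v, w v v = 0)
    (π : Equiv.Perm (Fin n)) (ρ : ℝ) (hρ : 1 ≤ ρ)
    (b : Fin n → Finset (Fin k) → ℝ) (hb : ∀ v T, 0 ≤ b v T)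
    (hb0 : ∀ v, b v ∅ = 0)
    (x : Fin n → Finset (Fin k) → ℝ) (hx : WIsLPSol w π ρ x) :
    ∃ S : Fin n → Finset (Fin k), WFeasibleAlloc w S ∧
      (∑ v : Fin n, ∑ T : Finset (Fin k), b v T * x v T)
          / (16 * Real.sqrt k * ρ * (Nat.clog 2 n : ℝ))
        ≤ ∑ v : Fin n, b v (S v) := by
  have hsqrt : 1 ≤ √(k : ℝ) := Real.one_le_sqrt.2 (by exact_mod_cast hk)
  set α := 4 * (√(k : ℝ) * ρ)
  have hα : 0 < α := by positivity
  set small := univ.filter fun T : Finset (Fin k) => #T ^ 2 ≤ k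
  obtain ⟨F, hF, hhalf⟩ : ∃ F, (∀ v, ∀ T ∈ F, overlapLoad w π F x v T ≤ α / 4) ∧
      ∑ v, ∑ T, b v T * x v T ≤ 2 * ∑ v, ∑ T ∈ F, b v T * x v T := by
    have hsplit := Finset.sum_add_distrib (s := univ) (f := fun v => ∑ T ∈ small, b v T * x v T)
      (g := fun v => ∑ T ∈ smallᶜ, b v T * x v T)
    simp only [Finset.sum_add_sum_compl] at hsplit
    rcases le_total (∑ v, ∑ T ∈ small, b v T * x v T) (∑ v, ∑ T ∈ smallᶜ, b v T * x v T) with h | h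
    · refine ⟨smallᶜ, fun v T _ => ?_, by linarith⟩
      refine (overlapLoad_le_of_le_card_sq hw hx hk (fun T' hT' => ?_) v T).trans_eq (by ring)
      simp only [small, Finset.mem_compl, Finset.mem_filter, Finset.mem_univ, true_and,
        not_le] at hT'
      exact hT'.le
    · exact ⟨small, fun v T hT => (overlapLoad_le_of_card_sq_le hw hx (by linarith) small
        (Finset.mem_filter.1 hT).2 v).trans_eq (by ring), by linarith⟩
  have hxα : ∀ v, ∑ T ∈ F, x v T ≤ α := fun v =>
    ((Finset.sum_le_sum_of_subset_of_nonneg (Finset.subset_univ F) fun _ _ _ => hx.1 v _).trans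
      (hx.2.2 v)).trans (by nlinarith)
  obtain ⟨S, hS, hSval⟩ := exists_partlyFeasible_of_overlapLoad_le hw hb hb0 hx.1 hα hxα hF
  obtain ⟨S', hS', hS'val⟩ := hS.exists_feasibleAlloc hn hw hw0 hb0
  refine ⟨S', hS', le_trans ?_ hS'val⟩
  rw [show 16 * √(k : ℝ) * ρ * (Nat.clog 2 n : ℝ) = 4 * α * Nat.clog 2 n by ring, ← div_div]
  gcongr
  refine le_trans ?_ hSval
  rw [div_le_div_iff₀ (by positivity) (by positivity)]
  nlinarith

/-- combined guarantee for weighted conflict graphs: there is a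
feasible allocation of value at least `b* / (16 √k ρ ⌈log₂ n⌉)`.
(`Nat.clog 2 n = ⌈log₂ n⌉`.) -/
theorem exists_feasible_alloc_of_weighted_lp_solution {n k : ℕ} (hn : 2 ≤ n)
    (hk : 1 ≤ k)
    (w : Fin n → Fin n → ℝ) (hw : ∀ u v, 0 ≤ w u v) (hw0 : ∀ v, w v v = 0)
    (π : Equiv.Perm (Fin n)) (ρ : ℝ) (hρ : 1 ≤ ρ)
    (hind : WIndIndepAtMost w π ρ)
    (b : Fin n → Finset (Fin k) → ℝ) (hb : ∀ v T, 0 ≤ b v T)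
    (hb0 : ∀ v, b v ∅ = 0)
    (x : Fin n → Finset (Fin k) → ℝ) (hx : WIsLPSol w π ρ x) :
    ∃ S : Fin n → Finset (Fin k), WFeasibleAlloc w S ∧
      (∑ v : Fin n, ∑ T : Finset (Fin k), b v T * x v T)
          / (16 * Real.sqrt k * ρ * (Nat.clog 2 n : ℝ))
        ≤ ∑ v : Fin n, b v (S v) :=
  exists_feasible_alloc_of_weighted_lp_solution_general hn hk w hw hw0 π ρ hρ b hb hb0 x hx
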